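/- Let γ > 0 and f = 1 − (√2/2)(z₁+z₂). With φ_{j,k} given by the closed-form coefficients c(j,k;m,n) = (√2/2)^{j+k−m−n}·((γ)_{m+n+1}/(γ)_{j+k+1})·(j!k!/(m!n!))·((j+k−m−n)!/((j−m)!(k−n)!)), for all j ≥ 0, k ≥ 1: ⟨z₁^j z₂^k, φ_{j+1,k−1}⟩_f = 0, where ⟨g,h⟩_f = ⟨gf,hf⟩_{H_γ} and H_γ has monomial squared norms a_{m,n} = m!n!/(γ)_{m+n} (a_{0,0}=1). -/
import Mathlib


open MvPolynomial

/-- Pochhammer symbol `(γ)_n = γ(γ+1)⋯(γ+n−1)`. -/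
noncomputable def poch (γ : ℝ) (n : ℕ) : ℝ := ∏ i ∈ Finset.range n, (γ + i)

/-- Squared norms of the monomials `z₁^m z₂^n` in `H_γ`. -/
noncomputable def aw (γ : ℝ) (m n : ℕ) : ℝ :=
  if m = 0 ∧ n = 0 then 1 else ((m.factorial * n.factorial : ℕ) : ℝ) / poch γ (m + n)

/-- The exponent `(m,n)` as a monomial degree in two variables. -/
noncomputable def deg2 (m n : ℕ) : Fin 2 →₀ ℕ := Finsupp.single 0 m + Finsupp.single 1 n

/-- The inner product on (the polynomials of) `H_γ`. -/
noncomputable def hip (γ : ℝ) (g h : MvPolynomial (Fin 2) ℂ) : ℂ :=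
  ∑ᶠ m : ℕ, ∑ᶠ n : ℕ,
    ((aw γ m n : ℝ) : ℂ) * g.coeff (deg2 m n) * (starRingEnd ℂ) (h.coeff (deg2 m n))

/-- The weight `f = 1 − (√2/2)(z₁ + z₂)`. -/
noncomputable def fw : MvPolynomial (Fin 2) ℂ :=
  1 - MvPolynomial.C ((Real.sqrt 2 / 2 : ℝ) : ℂ) * (X 0 + X 1)

/-- Closed-form coefficients of the weighted orthogonal polynomials. -/
noncomputable def c (γ : ℝ) (j k m n : ℕ) : ℝ :=
  (Real.sqrt 2 / 2) ^ (j + k - m - n) * (poch γ (m + n + 1) / poch γ (j + k + 1)) *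
    ((j.factorial * k.factorial : ℕ) / ((m.factorial * n.factorial : ℕ) : ℝ)) *
    (((j + k - m - n).factorial : ℝ) / (((j - m).factorial * (k - n).factorial : ℕ) : ℝ))

/-- The orthogonal polynomial `φ_{j,k}` given by the closed formula. -/
noncomputable def phi (γ : ℝ) (j k : ℕ) : MvPolynomial (Fin 2) ℂ :=
  ∑ m ∈ Finset.range (j + 1), ∑ n ∈ Finset.range (k + 1),
    MvPolynomial.C ((c γ j k m n : ℝ) : ℂ) * X 0 ^ m * X 1 ^ n

/- ### Auxiliary lemmas -/

lemma poch_pos (γ : ℝ) (hγ : 0 < γ) (n : ℕ) : 0 < poch γ n := by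
  unfold poch
  exact Finset.prod_pos fun i _ => by positivity

lemma deg2_apply0 (m n : ℕ) : deg2 m n 0 = m := by
  simp [deg2, Finsupp.single_apply]

lemma deg2_apply1 (m n : ℕ) : deg2 m n 1 = n := by
  simp [deg2, Finsupp.single_apply]

lemma deg2_inj {a b m n : ℕ} : deg2 a b = deg2 m n ↔ a = m ∧ b = n := by
  constructor
  · intro h
    constructor
    · have := congrArg (fun f : Fin 2 →₀ ℕ => f 0) h
      simpa [deg2_apply0] using this
    · have := congrArg (fun f : Fin 2 →₀ ℕ => f 1) h
      simpa [deg2_apply1] using this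
  · rintro ⟨rfl, rfl⟩; rfl

lemma deg2_add_right (a b : ℕ) : Finsupp.single 1 1 + deg2 a b = deg2 a (b + 1) := by
  ext x
  fin_cases x <;> simp [deg2, Finsupp.add_apply, Finsupp.single_apply]
  omega

lemma deg2_add_left (a b : ℕ) : Finsupp.single 0 1 + deg2 a b = deg2 (a + 1) b := by
  ext x
  fin_cases x <;> simp [deg2, Finsupp.add_apply, Finsupp.single_apply]
  omega

lemma X_pow_mul_eq (m n : ℕ) :
    (X 0 ^ m * X 1 ^ n : MvPolynomial (Fin 2) ℂ) = monomial (deg2 m n) 1 := by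
  rw [X_pow_eq_monomial, X_pow_eq_monomial, monomial_mul, one_mul]
  rfl

lemma coeff_phi_of_lt (γ : ℝ) (J K : ℕ) (d : Fin 2 →₀ ℕ) (h : K < d 1) :
    MvPolynomial.coeff d (phi γ J K) = 0 := by
  unfold phi
  rw [MvPolynomial.coeff_sum]
  refine Finset.sum_eq_zero fun m hm => ?_
  rw [MvPolynomial.coeff_sum]
  refine Finset.sum_eq_zero fun n hn => ?_
  rw [mul_assoc, X_pow_mul_eq, MvPolynomial.coeff_C_mul, MvPolynomial.coeff_monomial,
    if_neg, mul_zero]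
  intro he
  have h1 : (deg2 m n) 1 = d 1 := by rw [he]
  rw [deg2_apply1] at h1
  rw [Finset.mem_range] at hn
  omega

lemma coeff_phi (γ : ℝ) (J K a b : ℕ) (ha : a ≤ J) (hb : b ≤ K) :
    MvPolynomial.coeff (deg2 a b) (phi γ J K) = ((c γ J K a b : ℝ) : ℂ) := by
  unfold phi
  rw [MvPolynomial.coeff_sum]
  rw [Finset.sum_eq_single a]
  · rw [MvPolynomial.coeff_sum]
    rw [Finset.sum_eq_single b]
    · rw [mul_assoc, X_pow_mul_eq, MvPolynomial.coeff_C_mul, MvPolynomial.coeff_monomial,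
        if_pos rfl, mul_one]
    · intro n _ hn
      rw [mul_assoc, X_pow_mul_eq, MvPolynomial.coeff_C_mul, MvPolynomial.coeff_monomial,
        if_neg, mul_zero]
      intro he
      exact hn (deg2_inj.1 he).2
    · intro hb'
      exact absurd (Finset.mem_range.2 (by omega)) hb'
  · intro m _ hm
    rw [MvPolynomial.coeff_sum]
    refine Finset.sum_eq_zero fun n _ => ?_
    rw [mul_assoc, X_pow_mul_eq, MvPolynomial.coeff_C_mul, MvPolynomial.coeff_monomial,
      if_neg, mul_zero]
    intro he
    exact hm (deg2_inj.1 he).1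
  · intro ha'
    exact absurd (Finset.mem_range.2 (by omega)) ha'

lemma mul_fw (p : MvPolynomial (Fin 2) ℂ) :
    p * fw = p - C ((Real.sqrt 2 / 2 : ℝ) : ℂ) * (X 0 * p)
      - C ((Real.sqrt 2 / 2 : ℝ) : ℂ) * (X 1 * p) := by
  unfold fw; ring

lemma coeff_g (j k m n : ℕ) :
    MvPolynomial.coeff (deg2 m n) (X 0 ^ j * X 1 ^ (k + 1) * fw : MvPolynomial (Fin 2) ℂ) =
      (if j = m ∧ k + 1 = n then 1 else 0)
      - ((Real.sqrt 2 / 2 : ℝ) : ℂ) * (if j + 1 = m ∧ k + 1 = n then 1 else 0)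
      - ((Real.sqrt 2 / 2 : ℝ) : ℂ) * (if j = m ∧ k + 2 = n then 1 else 0) := by
  rw [mul_fw]
  have e0 : (X 0 * (X 0 ^ j * X 1 ^ (k + 1)) : MvPolynomial (Fin 2) ℂ)
      = X 0 ^ (j + 1) * X 1 ^ (k + 1) := by ring
  have e1 : (X 1 * (X 0 ^ j * X 1 ^ (k + 1)) : MvPolynomial (Fin 2) ℂ)
      = X 0 ^ j * X 1 ^ (k + 2) := by ring
  rw [coeff_sub, coeff_sub, coeff_C_mul, coeff_C_mul, e0, e1,
    X_pow_mul_eq, X_pow_mul_eq, X_pow_mul_eq,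
    coeff_monomial, coeff_monomial, coeff_monomial]
  simp only [deg2_inj]

lemma coeff_h1 (γ : ℝ) (j k : ℕ) :
    MvPolynomial.coeff (deg2 j (k + 1)) (phi γ (j + 1) k * fw) =
      -((Real.sqrt 2 / 2 : ℝ) : ℂ) * ((c γ (j + 1) k j k : ℝ) : ℂ) := by
  rw [mul_fw, coeff_sub, coeff_sub, coeff_C_mul, coeff_C_mul]
  have hphi : MvPolynomial.coeff (deg2 j (k + 1)) (phi γ (j + 1) k) = 0 :=
    coeff_phi_of_lt _ _ _ _ (by rw [deg2_apply1]; omega)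
  have hX0 : MvPolynomial.coeff (deg2 j (k + 1)) (X 0 * phi γ (j + 1) k) = 0 := by
    rw [coeff_X_mul']
    split
    · apply coeff_phi_of_lt
      rw [Finsupp.tsub_apply, deg2_apply1, Finsupp.single_apply]
      simp
    · rfl
  have hX1 : MvPolynomial.coeff (deg2 j (k + 1)) (X 1 * phi γ (j + 1) k)
      = ((c γ (j + 1) k j k : ℝ) : ℂ) := by
    rw [← deg2_add_right, coeff_X_mul, coeff_phi γ (j + 1) k j k (by omega) le_rfl]
  rw [hphi, hX0, hX1]
  ring

lemma coeff_h2 (γ : ℝ) (j k : ℕ) :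
    MvPolynomial.coeff (deg2 (j + 1) (k + 1)) (phi γ (j + 1) k * fw) =
      -((Real.sqrt 2 / 2 : ℝ) : ℂ) * ((c γ (j + 1) k (j + 1) k : ℝ) : ℂ) := by
  rw [mul_fw, coeff_sub, coeff_sub, coeff_C_mul, coeff_C_mul]
  have hphi : MvPolynomial.coeff (deg2 (j + 1) (k + 1)) (phi γ (j + 1) k) = 0 :=
    coeff_phi_of_lt _ _ _ _ (by rw [deg2_apply1]; omega)
  have hX0 : MvPolynomial.coeff (deg2 (j + 1) (k + 1)) (X 0 * phi γ (j + 1) k) = 0 := by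
    rw [← deg2_add_left, coeff_X_mul]
    exact coeff_phi_of_lt _ _ _ _ (by rw [deg2_apply1]; omega)
  have hX1 : MvPolynomial.coeff (deg2 (j + 1) (k + 1)) (X 1 * phi γ (j + 1) k)
      = ((c γ (j + 1) k (j + 1) k : ℝ) : ℂ) := by
    rw [← deg2_add_right, coeff_X_mul, coeff_phi γ (j + 1) k (j + 1) k le_rfl le_rfl]
  rw [hphi, hX0, hX1]
  ring

lemma coeff_h3 (γ : ℝ) (j k : ℕ) :
    MvPolynomial.coeff (deg2 j (k + 2)) (phi γ (j + 1) k * fw) = 0 := by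
  rw [mul_fw, coeff_sub, coeff_sub, coeff_C_mul, coeff_C_mul]
  have hphi : MvPolynomial.coeff (deg2 j (k + 2)) (phi γ (j + 1) k) = 0 :=
    coeff_phi_of_lt _ _ _ _ (by rw [deg2_apply1]; omega)
  have hX0 : MvPolynomial.coeff (deg2 j (k + 2)) (X 0 * phi γ (j + 1) k) = 0 := by
    rw [coeff_X_mul']
    split
    · apply coeff_phi_of_lt
      rw [Finsupp.tsub_apply, deg2_apply1, Finsupp.single_apply]
      simp
    · rfl
  have hX1 : MvPolynomial.coeff (deg2 j (k + 2)) (X 1 * phi γ (j + 1) k) = 0 := by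
    rw [show deg2 j (k + 2) = Finsupp.single 1 1 + deg2 j (k + 1) from (deg2_add_right j (k+1)).symm,
      coeff_X_mul]
    exact coeff_phi_of_lt _ _ _ _ (by rw [deg2_apply1]; omega)
  rw [hphi, hX0, hX1]
  ring

lemma key_real (γ : ℝ) (hγ : 0 < γ) (j k : ℕ) :
    aw γ j (k + 1) * (-(Real.sqrt 2 / 2 * c γ (j + 1) k j k))
      + aw γ (j + 1) (k + 1) * (Real.sqrt 2 / 2) * (Real.sqrt 2 / 2 * c γ (j + 1) k (j + 1) k)
      = 0 := by
  have e1 : j + 1 + k - j - k = 1 := by omega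
  have e2 : j + 1 + k - (j + 1) - k = 0 := by omega
  have e3 : j + 1 - j = 1 := by omega
  unfold aw c
  rw [e1, e2, e3]
  simp only [Nat.sub_self, Nat.factorial_one, Nat.factorial_zero, if_neg (by omega : ¬(j = 0 ∧ k + 1 = 0)),
    if_neg (by omega : ¬(j + 1 = 0 ∧ k + 1 = 0)), pow_one, pow_zero]
  have hP1 : poch γ (j + k + 1) ≠ 0 := ne_of_gt (poch_pos γ hγ _)
  have hP2 : poch γ (j + 1 + k + 1) ≠ 0 := ne_of_gt (poch_pos γ hγ _)
  have hfj : (j.factorial : ℝ) ≠ 0 := by positivity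
  have hfk : (k.factorial : ℝ) ≠ 0 := by positivity
  have hfj1 : ((j + 1).factorial : ℝ) ≠ 0 := by positivity
  have hfk1 : ((k + 1).factorial : ℝ) ≠ 0 := by positivity
  have hj1 : j + (k + 1) = j + k + 1 := by omega
  have hj2 : j + 1 + (k + 1) = j + 1 + k + 1 := by omega
  have hj3 : j + k + 1 + 1 = j + 1 + k + 1 := by omega
  rw [hj1, hj2]
  push_cast
  field_simp
  ring

theorem monomial_phi_inner_product_vanishing (γ : ℝ) (hγ : 0 < γ) (j k : ℕ) (hk : 1 ≤ k) :
    hip γ (X 0 ^ j * X 1 ^ k * fw) (phi γ (j + 1) (k - 1) * fw) = 0 := by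
  obtain ⟨k, rfl⟩ : ∃ k', k = k' + 1 := ⟨k - 1, by omega⟩
  simp only [Nat.add_sub_cancel]
  set s : ℂ := ((Real.sqrt 2 / 2 : ℝ) : ℂ) with hs
  set g : MvPolynomial (Fin 2) ℂ := X 0 ^ j * X 1 ^ (k + 1) * fw with hg
  set h : MvPolynomial (Fin 2) ℂ := phi γ (j + 1) k * fw with hh
  set F : ℕ → ℕ → ℂ := fun m n =>
    ((aw γ m n : ℝ) : ℂ) * g.coeff (deg2 m n) * (starRingEnd ℂ) (h.coeff (deg2 m n)) with hF
  have hgz : ∀ m n, ¬(j = m ∧ k + 1 = n) → ¬(j + 1 = m ∧ k + 1 = n) → ¬(j = m ∧ k + 2 = n) →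
      g.coeff (deg2 m n) = 0 := by
    intro m n h1 h2 h3
    rw [hg, coeff_g, if_neg h1, if_neg h2, if_neg h3]
    ring
  have hFz : ∀ m n, ¬(j = m ∧ k + 1 = n) → ¬(j + 1 = m ∧ k + 1 = n) → ¬(j = m ∧ k + 2 = n) →
      F m n = 0 := by
    intro m n h1 h2 h3
    rw [hF]
    simp only
    rw [hgz m n h1 h2 h3]
    ring
  have houter : hip γ g h = (∑ᶠ n, F j n) + (∑ᶠ n, F (j + 1) n) := by
    unfold hip
    rw [finsum_eq_sum_of_support_subset _ (s := ({j, j + 1} : Finset ℕ)) ?_]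
    · rw [Finset.sum_insert (by simp), Finset.sum_singleton]
    · intro m hm
      simp only [Finset.coe_insert, Finset.coe_singleton, Set.mem_insert_iff,
        Set.mem_singleton_iff]
      by_contra hc
      push_neg at hc
      apply hm
      have : ∀ n, F m n = 0 := fun n => hFz m n (by omega) (by omega) (by omega)
      simp only [Function.mem_support, ne_eq, not_not] at *
      calc ∑ᶠ n, F m n = ∑ᶠ _ : ℕ, (0 : ℂ) := finsum_congr this
        _ = 0 := finsum_zero
  have hinner1 : (∑ᶠ n, F j n) = F j (k + 1) + F j (k + 2) := by
    rw [finsum_eq_sum_of_support_subset _ (s := ({k + 1, k + 2} : Finset ℕ)) ?_]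
    · rw [Finset.sum_insert (by simp), Finset.sum_singleton]
    · intro n hn
      simp only [Finset.coe_insert, Finset.coe_singleton, Set.mem_insert_iff,
        Set.mem_singleton_iff]
      by_contra hc
      push_neg at hc
      exact hn (hFz j n (by omega) (by omega) (by omega))
  have hinner2 : (∑ᶠ n, F (j + 1) n) = F (j + 1) (k + 1) := by
    rw [finsum_eq_sum_of_support_subset _ (s := ({k + 1} : Finset ℕ)) ?_]
    · rw [Finset.sum_singleton]
    · intro n hn
      simp only [Finset.coe_singleton, Set.mem_singleton_iff]
      by_contra hc
      exact hn (hFz (j + 1) n (by omega) (by omega) (by omega))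
  rw [houter, hinner1, hinner2]
  have hg1 : g.coeff (deg2 j (k + 1)) = 1 := by
    rw [hg, coeff_g, if_pos ⟨rfl, rfl⟩, if_neg (by omega), if_neg (by omega)]
    ring
  have hg2 : g.coeff (deg2 (j + 1) (k + 1)) = -s := by
    rw [hg, coeff_g, if_neg (by omega), if_pos ⟨rfl, rfl⟩, if_neg (by omega)]
    ring
  have hg3 : g.coeff (deg2 j (k + 2)) = -s := by
    rw [hg, coeff_g, if_neg (by omega), if_neg (by omega), if_pos ⟨rfl, rfl⟩]
    ring
  have hF1 : F j (k + 1) = ((aw γ j (k + 1) : ℝ) : ℂ)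
      * ((-(Real.sqrt 2 / 2 * c γ (j + 1) k j k) : ℝ) : ℂ) := by
    rw [hF]
    simp only
    rw [hg1, hh, coeff_h1, map_mul, map_neg, Complex.conj_ofReal, Complex.conj_ofReal]
    push_cast
    ring
  have hF2 : F (j + 1) (k + 1) = ((aw γ (j + 1) (k + 1) : ℝ) : ℂ) * ((Real.sqrt 2 / 2 : ℝ) : ℂ)
      * (((Real.sqrt 2 / 2 * c γ (j + 1) k (j + 1) k) : ℝ) : ℂ) := by
    rw [hF]
    simp only
    rw [hg2, hh, coeff_h2, map_mul, map_neg, Complex.conj_ofReal, Complex.conj_ofReal, hs]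
    push_cast
    ring
  have hF3 : F j (k + 2) = 0 := by
    rw [hF]
    simp only
    rw [hh, coeff_h3, map_zero, mul_zero]
  rw [hF1, hF2, hF3, add_zero]
  have := key_real γ hγ j k
  calc ((aw γ j (k + 1) : ℝ) : ℂ) * ((-(Real.sqrt 2 / 2 * c γ (j + 1) k j k) : ℝ) : ℂ)
        + ((aw γ (j + 1) (k + 1) : ℝ) : ℂ) * ((Real.sqrt 2 / 2 : ℝ) : ℂ)
          * (((Real.sqrt 2 / 2 * c γ (j + 1) k (j + 1) k) : ℝ) : ℂ)
      = ((aw γ j (k + 1) * (-(Real.sqrt 2 / 2 * c γ (j + 1) k j k))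
          + aw γ (j + 1) (k + 1) * (Real.sqrt 2 / 2)
            * (Real.sqrt 2 / 2 * c γ (j + 1) k (j + 1) k) : ℝ) : ℂ) := by
        push_cast; ring
    _ = 0 := by rw [this, Complex.ofReal_zero]
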